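/- For every integer n ≥ 2 and every ε ∈ (0,1), h(x, ε) tends to +∞ as x → 1 from the right, and h(x, ε) tends to −∞ as x → 1 from the left. -/

import Mathlib

/-- `k_n = (1/(4n)) · Σ_{k=1}^{n-1} 1/sin(kπ/n)` -/
noncomputable def kn (n : ℕ) : ℝ :=
  (1 / (4 * n)) * ∑ k ∈ Finset.Icc 1 (n - 1), 1 / Real.sin (k * Real.pi / n)

/-- `φ_k = (2k-1)π/n`, and `u_k = cos φ_k`. -/
noncomputable def phi (n k : ℕ) : ℝ := (2 * (k : ℝ) - 1) * Real.pi / n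

/-- The reduced central configuration function
`h(x, ε) = −n·k_n·(ε−x³)/(1−x³) − (x²/(1−x³))·Σ_{k=1}^{n} [x(1−ε) − (1−εx²)u_k]/(1+x²−2xu_k)^{3/2}`,
where `u_k = cos φ_k`.  Solutions of `h(x, ε) = μ` are the rosette central configurations. -/
noncomputable def h (n : ℕ) (x ε : ℝ) : ℝ :=
  -((n : ℝ) * kn n) * (ε - x ^ 3) / (1 - x ^ 3) -
    (x ^ 2 / (1 - x ^ 3)) * ∑ k ∈ Finset.Icc 1 n,
      (x * (1 - ε) - (1 - ε * x ^ 2) * Real.cos (phi n k)) /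
        (1 + x ^ 2 - 2 * x * Real.cos (phi n k)) ^ ((3 : ℝ) / 2)

/-!
Write `h(x, ε) = N(x) / (1 - x³)`, where the numerator `N` is continuous at `x = 1`. With
`θ = π / (2n)` one finds `N(1) = (1 - ε)/4 · (Σ_{j<n-1} 1/sin((2j+2)θ) - Σ_{j<n} 1/sin((2j+1)θ))`.
Since `1/sin` is convex on `(0, π)`, each even-indexed term is at most the mean of its two odd
neighbours, and summing these inequalities leaves the two outer odd terms unmatched: so
`N(1) < 0` whenever `ε < 1`, and the sign of `1 - x³` on either side of `1` decides the limit.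
-/

open Real Filter Finset Topology

lemma convexOn_inv_sin : ConvexOn ℝ (Set.Ioo 0 π) fun x => (sin x)⁻¹ := by
  have hsin : ConcaveOn ℝ (Set.Ioo 0 π) sin :=
    strictConcaveOn_sin_Icc.concaveOn.subset Set.Ioo_subset_Icc_self (convex_Ioo 0 π)
  have himage : sin '' Set.Ioo 0 π ⊆ Set.Ioi 0 := by
    rintro _ ⟨x, hx, rfl⟩
    exact sin_pos_of_pos_of_lt_pi hx.1 hx.2
  have hconvex : Convex ℝ (sin '' Set.Ioo 0 π) :=
    (isPreconnected_Ioo.image sin continuous_sin.continuousOn).convex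
  have hinv : ConvexOn ℝ (sin '' Set.Ioo 0 π) fun y : ℝ => y⁻¹ := by
    simpa only [zpow_neg_one] using (convexOn_zpow (𝕜 := ℝ) (-1)).subset himage hconvex
  exact hinv.comp_concaveOn hsin fun a ha b _ hab => inv_anti₀ (himage ha) hab

lemma inv_sin_le_midpoint {m θ : ℝ} (hθ : 0 ≤ θ) (h₁ : 0 < m - θ) (h₂ : m + θ < π) :
    (sin m)⁻¹ ≤ ((sin (m - θ))⁻¹ + (sin (m + θ))⁻¹) / 2 := by
  have := convexOn_inv_sin.2 (⟨h₁, by linarith⟩ : m - θ ∈ Set.Ioo 0 π)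
    (⟨by linarith, h₂⟩ : m + θ ∈ Set.Ioo 0 π) (by norm_num : (0 : ℝ) ≤ 1 / 2)
    (by norm_num : (0 : ℝ) ≤ 1 / 2) (by norm_num)
  simp only [smul_eq_mul] at this
  rwa [show 1 / 2 * (m - θ) + 1 / 2 * (m + θ) = m by ring, ← mul_add, one_div_mul_eq_div] at this

lemma sum_range_le_of_le_midpoint {a b : ℕ → ℝ} {m : ℕ}
    (h : ∀ i < m, b i ≤ (a i + a (i + 1)) / 2) :
    ∑ i ∈ range m, b i ≤ ∑ i ∈ range (m + 1), a i - (a 0 + a m) / 2 := by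
  induction m with
  | zero => simp
  | succ m ih =>
    rw [sum_range_succ, sum_range_succ _ (m + 1)]
    linarith [ih fun i hi => h i (by omega), h m (by omega)]

lemma phi_half_eq (n k : ℕ) : phi n k / 2 = (2 * k - 1) * (π / (2 * n)) := by
  rw [phi]; ring

lemma sin_phi_half_pos {n k : ℕ} (hk : k ∈ Icc 1 n) : 0 < sin (phi n k / 2) := by
  obtain ⟨hk₁, hk₂⟩ := Finset.mem_Icc.mp hk
  have hk₁' : (1 : ℝ) ≤ k := by exact_mod_cast hk₁
  have hk₂' : (k : ℝ) ≤ n := by exact_mod_cast hk₂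
  have hn : (0 : ℝ) < n := by linarith
  apply sin_pos_of_pos_of_lt_pi
  · have : (0 : ℝ) < 2 * k - 1 := by linarith
    rw [phi_half_eq]
    positivity
  · rw [phi_half_eq, ← mul_div_assoc, div_lt_iff₀ (by positivity)]
    nlinarith [pi_pos]

lemma sum_inv_sin_even_lt_odd {n : ℕ} (hn : n ≠ 0) :
    ∑ k ∈ Icc 1 (n - 1), 1 / sin (k * π / n) < ∑ k ∈ Icc 1 n, 1 / sin (phi n k / 2) := by
  obtain ⟨m, rfl⟩ := Nat.exists_eq_add_one_of_ne_zero hn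
  set θ : ℝ := π / (2 * ((m + 1 : ℕ) : ℝ)) with hθ
  have hθ_pos : 0 < θ := by positivity
  have hπ : π = 2 * (m + 1) * θ := by rw [hθ]; push_cast; field_simp
  set a : ℕ → ℝ := fun i => (sin ((2 * i + 1) * θ))⁻¹
  have ha_pos : ∀ i ≤ m, 0 < a i := by
    intro i hi
    have hi' : (i : ℝ) ≤ m := by exact_mod_cast hi
    exact inv_pos.mpr (sin_pos_of_pos_of_lt_pi (by positivity) (by rw [hπ]; nlinarith))
  have hodd : ∑ k ∈ Icc 1 (m + 1), 1 / sin (phi (m + 1) k / 2) = ∑ i ∈ range (m + 1), a i := by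
    rw [← Ico_add_one_right_eq_Icc, sum_Ico_eq_sum_range, Nat.add_sub_cancel]
    refine sum_congr rfl fun i _ => ?_
    rw [phi_half_eq, one_div, ← hθ]
    simp only [a]; push_cast; ring_nf
  have heven : ∑ k ∈ Icc 1 (m + 1 - 1), 1 / sin (k * π / ((m + 1 : ℕ) : ℝ))
      = ∑ i ∈ range m, (sin ((2 * i + 2) * θ))⁻¹ := by
    rw [Nat.add_sub_cancel, ← Ico_add_one_right_eq_Icc, sum_Ico_eq_sum_range, Nat.add_sub_cancel]
    refine sum_congr rfl fun i _ => ?_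
    rw [one_div, hθ]
    congr 2
    push_cast; field_simp; ring
  rw [hodd, heven]
  calc ∑ i ∈ range m, (sin ((2 * i + 2) * θ))⁻¹ ≤ ∑ i ∈ range (m + 1), a i - (a 0 + a m) / 2 := by
        refine sum_range_le_of_le_midpoint fun i hi => ?_
        have hi' : (i : ℝ) + 1 ≤ m := by exact_mod_cast hi
        convert inv_sin_le_midpoint (m := (2 * i + 2) * θ) hθ_pos.le (by nlinarith)
          (by rw [hπ]; nlinarith) using 3 <;> simp only [a] <;> push_cast <;> ring_nf
    _ < ∑ i ∈ range (m + 1), a i := by linarith [ha_pos 0 (Nat.zero_le m), ha_pos m le_rfl]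

noncomputable def hNumerator (n : ℕ) (x ε : ℝ) : ℝ :=
  -((n : ℝ) * kn n) * (ε - x ^ 3) -
    x ^ 2 * ∑ k ∈ Icc 1 n,
      (x * (1 - ε) - (1 - ε * x ^ 2) * cos (phi n k)) /
        (1 + x ^ 2 - 2 * x * cos (phi n k)) ^ ((3 : ℝ) / 2)

lemma h_eq_hNumerator_div (n : ℕ) (x ε : ℝ) : h n x ε = hNumerator n x ε / (1 - x ^ 3) := by
  rw [h, hNumerator, sub_div, mul_div_right_comm (x ^ 2)]

lemma one_add_one_sub_two_cos (φ : ℝ) : 1 + 1 ^ 2 - 2 * 1 * cos φ = (2 * sin (φ / 2)) ^ 2 := by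
  have hcos : cos φ = 2 * cos (φ / 2) ^ 2 - 1 := by rw [← cos_two_mul]; ring_nf
  linear_combination (-2) * hcos - 4 * sin_sq_add_cos_sq (φ / 2)

lemma continuousAt_hNumerator (n : ℕ) (ε : ℝ) : ContinuousAt (fun x => hNumerator n x ε) 1 := by
  unfold hNumerator
  refine ContinuousAt.sub (by fun_prop) (ContinuousAt.mul (by fun_prop) ?_)
  refine tendsto_finsetSum _ fun k hk => ContinuousAt.div (by fun_prop)
    (ContinuousAt.rpow_const (by fun_prop) (Or.inr (by norm_num))) ?_
  rw [one_add_one_sub_two_cos]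
  exact (rpow_pos_of_pos (by nlinarith [sin_phi_half_pos hk]) _).ne'

lemma summand_at_one (ε : ℝ) {φ : ℝ} (hφ : 0 < sin (φ / 2)) :
    (1 * (1 - ε) - (1 - ε * 1 ^ 2) * cos φ) / (1 + 1 ^ 2 - 2 * 1 * cos φ) ^ ((3 : ℝ) / 2)
      = (1 - ε) / 4 * (1 / sin (φ / 2)) := by
  have hcube : ((2 * sin (φ / 2)) ^ 2) ^ ((3 : ℝ) / 2) = (2 * sin (φ / 2)) ^ 3 := by
    rw [← rpow_natCast, ← rpow_mul (by positivity)]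
    norm_num
  have hnum : 1 * (1 - ε) - (1 - ε * 1 ^ 2) * cos φ = (1 - ε) / 2 * (2 * sin (φ / 2)) ^ 2 := by
    linear_combination (1 - ε) / 2 * one_add_one_sub_two_cos φ
  rw [one_add_one_sub_two_cos, hcube, hnum]
  field_simp
  ring

lemma hNumerator_one {n : ℕ} (hn : n ≠ 0) (ε : ℝ) :
    hNumerator n 1 ε = (1 - ε) / 4 *
      (∑ k ∈ Icc 1 (n - 1), 1 / sin (k * π / n) - ∑ k ∈ Icc 1 n, 1 / sin (phi n k / 2)) := by
  have hkn : (n : ℝ) * kn n = 1 / 4 * ∑ k ∈ Icc 1 (n - 1), 1 / sin (k * π / n) := by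
    rw [kn, ← mul_assoc]
    congr 1
    field_simp
  rw [hNumerator, hkn, sum_congr rfl fun k hk => summand_at_one ε (sin_phi_half_pos hk),
    ← mul_sum]
  ring

lemma hNumerator_one_neg {n : ℕ} (hn : n ≠ 0) {ε : ℝ} (hε : ε < 1) : hNumerator n 1 ε < 0 := by
  rw [hNumerator_one hn]
  exact mul_neg_of_pos_of_neg (by linarith) (sub_neg.mpr (sum_inv_sin_even_lt_odd hn))

lemma tendsto_one_sub_pow_nhdsGT_one {p : ℕ} (hp : p ≠ 0) :
    Tendsto (fun x : ℝ => 1 - x ^ p) (𝓝[>] 1) (𝓝[<] 0) := by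
  refine tendsto_nhdsWithin_of_tendsto_nhds_of_eventually_within _ ?_ ?_
  · exact ((continuous_const.sub (continuous_pow p)).tendsto' (1 : ℝ) 0 (by simp)).mono_left
      nhdsWithin_le_nhds
  · filter_upwards [self_mem_nhdsWithin] with x hx
    exact sub_neg.mpr (one_lt_pow₀ (Set.mem_Ioi.mp hx) hp)

lemma tendsto_one_sub_pow_nhdsLT_one {p : ℕ} (hp : p ≠ 0) :
    Tendsto (fun x : ℝ => 1 - x ^ p) (𝓝[<] 1) (𝓝[>] 0) := by
  refine tendsto_nhdsWithin_of_tendsto_nhds_of_eventually_within _ ?_ ?_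
  · exact ((continuous_const.sub (continuous_pow p)).tendsto' (1 : ℝ) 0 (by simp)).mono_left
      nhdsWithin_le_nhds
  · filter_upwards [Ioo_mem_nhdsLT zero_lt_one] with x hx
    exact sub_pos.mpr (pow_lt_one₀ hx.1.le hx.2 hp)

lemma tendsto_div_one_sub_pow_nhdsGT_one {f : ℝ → ℝ} {c : ℝ} {p : ℕ} (hp : p ≠ 0)
    (hf : Tendsto f (𝓝[>] 1) (𝓝 c)) (hc : c < 0) :
    Tendsto (fun x => f x / (1 - x ^ p)) (𝓝[>] 1) atTop :=
  Tendsto.congr (fun _ => (div_eq_mul_inv _ _).symm) <|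
    hf.neg_mul_atBot hc (tendsto_one_sub_pow_nhdsGT_one hp).inv_tendsto_nhdsLT_zero

lemma tendsto_div_one_sub_pow_nhdsLT_one {f : ℝ → ℝ} {c : ℝ} {p : ℕ} (hp : p ≠ 0)
    (hf : Tendsto f (𝓝[<] 1) (𝓝 c)) (hc : c < 0) :
    Tendsto (fun x => f x / (1 - x ^ p)) (𝓝[<] 1) atBot :=
  Tendsto.congr (fun _ => (div_eq_mul_inv _ _).symm) <|
    hf.neg_mul_atTop hc (tendsto_one_sub_pow_nhdsLT_one hp).inv_tendsto_nhdsGT_zero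

/-- For `n ≥ 2`, `ε ∈ (0,1)`: `h(x, ε) → +∞` as `x → 1⁺` and `h(x, ε) → −∞` as `x → 1⁻`. -/
theorem h_tendsto_at_one (n : ℕ) (hn : 2 ≤ n) (ε : ℝ) (hε : ε ∈ Set.Ioo (0 : ℝ) 1) :
    Filter.Tendsto (fun x => h n x ε) (nhdsWithin 1 (Set.Ioi 1)) Filter.atTop ∧
    Filter.Tendsto (fun x => h n x ε) (nhdsWithin 1 (Set.Iio 1)) Filter.atBot := by
  have hN := (continuousAt_hNumerator n ε).tendsto
  have hN_neg := hNumerator_one_neg (by omega : n ≠ 0) hε.2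
  simp only [h_eq_hNumerator_div]
  exact ⟨tendsto_div_one_sub_pow_nhdsGT_one three_ne_zero (hN.mono_left nhdsWithin_le_nhds) hN_neg,
    tendsto_div_one_sub_pow_nhdsLT_one three_ne_zero (hN.mono_left nhdsWithin_le_nhds) hN_neg⟩
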